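/- arXiv:math/0602615 — 6 statements merged into one kernel-verified Lean document; each statement's English description precedes it below -/
import Mathlib

section
/- For ω > 0, the difference of derivatives of Barnes' double zeta function satisfies G(ω,ω) - G(ω,1) = (1/2) log ω, where G(ω,z) = ∂/∂s ζ₂(s,ω,z)|_{s=0}. Equivalently, the double sine function satisfies S(ω,1) = ω^{1/2} and S(ω,ω) = ω^{-1/2}. -/
/-!
For `Re s > 2` write `f(p, q) = (pω + q)^{-s}`. Then `ζ₂(s,ω,ω)` and `ζ₂(s,ω,1)` are the
sums of `f` over `p ≥ 1` and over `q ≥ 1`. Each is the full lattice sum minus one boundary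
line, so their difference is `∑_p f(p, 0) - ∑_q f(0, q) = (ω^{-s} - 1) ζ(s)`. Both sides are
holomorphic off `{1, 2}`, whose complement is connected, so the identity persists there.
Differentiating at `s = 0` with `ζ(0) = -1/2` gives `G(ω,ω) - G(ω,1) = (1/2) log ω`, and the
double sine values are the exponentials of `±(1/2) log ω`.
-/

open Complex Filter Set Topology

/-- `H` is the meromorphic continuation of Barnes' double zeta function
`ζ₂(s,ω,z) = ∑_{p,q≥0} (z + pω + q)^{-s}`. -/
def IsBarnesZeta2 (ω z : ℝ) (H : ℂ → ℂ) : Prop :=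
  DifferentiableOn ℂ H ({1, 2} : Set ℂ)ᶜ ∧
    ∀ s : ℂ, 2 < s.re → H s = ∑' (p : ℕ) (q : ℕ), ((z : ℂ) + p * ω + q) ^ (-s)

/-- `S` is the value of the double sine function
`𝒮(ω,z) = exp(G(ω,1+ω-z) - G(ω,z))` where `G(ω,z) = ζ₂'(0,ω,z)`. -/
def IsDoubleSine (ω z : ℝ) (S : ℂ) : Prop :=
  ∃ H1 H2 : ℂ → ℂ, IsBarnesZeta2 ω (1 + ω - z) H1 ∧ IsBarnesZeta2 ω z H2 ∧
    S = Complex.exp (deriv H1 0 - deriv H2 0)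

lemma min_one_mul_max_le {ω : ℝ} (hω : 0 < ω) (p q : ℕ) :
    min ω 1 * max (p : ℝ) q ≤ p * ω + q := by
  have hp : min ω 1 * p ≤ p * ω := by
    nlinarith [min_le_left ω 1, (p.cast_nonneg : (0:ℝ) ≤ p)]
  have hq : min ω 1 * q ≤ q := by
    nlinarith [min_le_right ω 1, (q.cast_nonneg : (0:ℝ) ≤ q)]
  rcases le_total (p : ℝ) q with h | h
  · rw [max_eq_right h]; nlinarith [lt_min hω one_pos]
  · rw [max_eq_left h]; nlinarith [lt_min hω one_pos, (q.cast_nonneg : (0:ℝ) ≤ q)]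

lemma summable_cpow_neg_natLattice {ω : ℝ} (hω : 0 < ω) {s : ℂ} (hs : 2 < s.re) :
    Summable fun pq : ℕ × ℕ => ((pq.1 : ℂ) * ω + pq.2) ^ (-s) := by
  set c := min ω 1
  have hc : 0 < c := lt_min hω one_pos
  have hinj : Function.Injective fun pq : ℕ × ℕ => (![pq.1, pq.2] : Fin 2 → ℤ) := by
    intro a b h
    have h0 := congrFun h 0
    have h1 := congrFun h 1
    simp only [Matrix.cons_val_zero, Matrix.cons_val_one, Nat.cast_inj] at h0 h1
    exact Prod.ext h0 h1
  refine Summable.of_norm_bounded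
    (((EisensteinSeries.summable_one_div_norm_rpow hs).comp_injective hinj).mul_left
      (c ^ (-s.re))) fun ⟨p, q⟩ => ?_
  have hnorm : ‖(((p : ℕ) : ℂ) * ω + q) ^ (-s)‖ = ((p : ℝ) * ω + q) ^ (-s.re) := by
    rw [show ((p : ℂ) * ω + q) = (((p : ℝ) * ω + q : ℝ) : ℂ) by push_cast; ring,
      norm_cpow_eq_rpow_re_of_nonneg (by positivity) (by simp; linarith), neg_re]
  have hmax : ‖(![(p : ℤ), q] : Fin 2 → ℤ)‖ = max (p : ℝ) q := by
    simp [EisensteinSeries.norm_eq_max_natAbs]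
  simp only [Function.comp_apply, hnorm, hmax]
  have hσ : -s.re < 0 := by linarith
  by_cases hpq : p = 0 ∧ q = 0
  · obtain ⟨rfl, rfl⟩ := hpq
    simp [Real.zero_rpow hσ.ne]
  have hm : 0 < max (p : ℝ) q := by
    rcases not_and_or.mp hpq with hp | hq
    · exact lt_max_of_lt_left (by positivity)
    · exact lt_max_of_lt_right (by positivity)
  calc ((p : ℝ) * ω + q) ^ (-s.re) ≤ (c * max (p : ℝ) q) ^ (-s.re) :=
        Real.rpow_le_rpow_of_nonpos (by positivity) (min_one_mul_max_le hω p q) hσ.le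
    _ = c ^ (-s.re) * max (p : ℝ) q ^ (-s.re) := Real.mul_rpow hc.le hm.le

theorem Summable.tsum_tsum_succ_fst_sub_tsum_tsum_succ_snd {E : Type*} [NormedAddCommGroup E]
    [CompleteSpace E] {f : ℕ × ℕ → E} (hf : Summable f) :
    ∑' (p : ℕ) (q : ℕ), f (p + 1, q) - ∑' (p : ℕ) (q : ℕ), f (p, q + 1) =
      ∑' p : ℕ, f (p, 0) - ∑' q : ℕ, f (0, q) := by
  have hrow : Summable fun p : ℕ => f (p, 0) := hf.comp_injective (Prod.mk_left_injective 0)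
  have hshift : Summable fun pq : ℕ × ℕ => f (pq.1, pq.2 + 1) :=
    hf.comp_injective (Prod.map_injective.mpr ⟨Function.injective_id, add_left_injective 1⟩)
  have peel_row : ∑' (p : ℕ) (q : ℕ), f (p, q) =
      ∑' q : ℕ, f (0, q) + ∑' (p : ℕ) (q : ℕ), f (p + 1, q) :=
    hf.prod.tsum_eq_zero_add
  have peel_col : ∑' (p : ℕ) (q : ℕ), f (p, q) =
      ∑' p : ℕ, f (p, 0) + ∑' (p : ℕ) (q : ℕ), f (p, q + 1) := by
    rw [← hrow.tsum_add hshift.prod]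
    exact tsum_congr fun p => (hf.prod_factor p).tsum_eq_zero_add
  rw [sub_eq_sub_iff_add_eq_add, add_comm, ← peel_row, peel_col]

lemma tsum_natCast_cpow_neg {s : ℂ} (hs : 1 < s.re) :
    ∑' n : ℕ, (n : ℂ) ^ (-s) = riemannZeta s := by
  rw [zeta_eq_tsum_one_div_nat_cpow hs]
  exact tsum_congr fun n => by rw [cpow_neg, one_div]

lemma tsum_natCast_mul_cpow_neg {ω : ℝ} (hω : 0 ≤ ω) {s : ℂ} (hs : 1 < s.re) :
    ∑' n : ℕ, ((n : ℂ) * ω) ^ (-s) = (ω : ℂ) ^ (-s) * riemannZeta s := by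
  rw [← tsum_natCast_cpow_neg hs, ← tsum_mul_left]
  refine tsum_congr fun n => ?_
  rw [← ofReal_natCast, mul_cpow_ofReal_nonneg n.cast_nonneg hω, mul_comm]

lemma IsBarnesZeta2.sub_eq_of_two_lt_re {ω : ℝ} (hω : 0 < ω) {H1 H2 : ℂ → ℂ}
    (h1 : IsBarnesZeta2 ω ω H1) (h2 : IsBarnesZeta2 ω 1 H2) {s : ℂ} (hs : 2 < s.re) :
    H1 s - H2 s = ((ω : ℂ) ^ (-s) - 1) * riemannZeta s := by
  have key := (summable_cpow_neg_natLattice hω hs).tsum_tsum_succ_fst_sub_tsum_tsum_succ_snd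
  simp only [Nat.cast_zero, zero_mul, zero_add, add_zero, Nat.cast_add, Nat.cast_one] at key
  rw [tsum_natCast_mul_cpow_neg hω.le (by linarith), tsum_natCast_cpow_neg (by linarith)] at key
  rw [h1.2 s hs, h2.2 s hs, sub_one_mul, ← key]
  congr 1 <;> exact tsum_congr fun p => tsum_congr fun q => by push_cast; ring_nf

theorem DifferentiableOn.eqOn_compl_of_eventuallyEq {S : Set ℂ} (hS : S.Countable)
    (hS' : IsClosed S) {F G : ℂ → ℂ} (hF : DifferentiableOn ℂ F Sᶜ)
    (hG : DifferentiableOn ℂ G Sᶜ) {z₀ : ℂ} (hz₀ : z₀ ∉ S) (h : F =ᶠ[𝓝 z₀] G) :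
    EqOn F G Sᶜ :=
  (hF.analyticOnNhd hS'.isOpen_compl).eqOn_of_preconnected_of_eventuallyEq
    (hG.analyticOnNhd hS'.isOpen_compl)
    (hS.isPathConnected_compl_of_one_lt_rank
      (by simp [Complex.rank_real_complex])).isConnected.isPreconnected hz₀ h

lemma IsBarnesZeta2.sub_eqOn {ω : ℝ} (hω : 0 < ω) {H1 H2 : ℂ → ℂ}
    (h1 : IsBarnesZeta2 ω ω H1) (h2 : IsBarnesZeta2 ω 1 H2) :
    EqOn (H1 - H2) (fun s => ((ω : ℂ) ^ (-s) - 1) * riemannZeta s) ({1, 2} : Set ℂ)ᶜ := by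
  have hω' : (ω : ℂ) ≠ 0 := ofReal_ne_zero.mpr hω.ne'
  refine (h1.1.sub h2.1).eqOn_compl_of_eventuallyEq ((countable_singleton _).insert _)
    ((finite_singleton _).insert _).isClosed ?_ (z₀ := 3) (by norm_num) ?_
  · rintro s hs
    have hs1 : s ≠ 1 := fun h => hs (by simp [h])
    exact ((((differentiableAt_id.neg.const_cpow (Or.inl hω')).sub_const 1).mul
      (differentiableAt_riemannZeta hs1))).differentiableWithinAt
  · filter_upwards [(isOpen_lt continuous_const continuous_re).mem_nhds
      (show (2 : ℝ) < (3 : ℂ).re by norm_num)] with s hs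
    exact h1.sub_eq_of_two_lt_re hω h2 hs

lemma hasDerivAt_cpow_neg_sub_one_mul_riemannZeta {ω : ℝ} (hω : 0 < ω) :
    HasDerivAt (fun s => ((ω : ℂ) ^ (-s) - 1) * riemannZeta s)
      ((Real.log ω / 2 : ℝ) : ℂ) 0 := by
  have hω' : (ω : ℂ) ≠ 0 := ofReal_ne_zero.mpr hω.ne'
  refine ((((hasDerivAt_neg (0 : ℂ)).const_cpow (Or.inl hω')).sub_const 1).mul
    (differentiableAt_riemannZeta zero_ne_one).hasDerivAt).congr_deriv ?_
  rw [riemannZeta_zero, neg_zero, cpow_zero, sub_self, zero_mul, add_zero, ← ofReal_log hω.le]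
  push_cast
  ring

lemma IsBarnesZeta2.deriv_sub_deriv {ω : ℝ} (hω : 0 < ω) {H1 H2 : ℂ → ℂ}
    (h1 : IsBarnesZeta2 ω ω H1) (h2 : IsBarnesZeta2 ω 1 H2) :
    deriv H1 0 - deriv H2 0 = ((Real.log ω / 2 : ℝ) : ℂ) := by
  have hU : ({1, 2} : Set ℂ)ᶜ ∈ 𝓝 0 :=
    ((finite_singleton _).insert _).isClosed.isOpen_compl.mem_nhds (by norm_num)
  rw [← deriv_sub (h1.1.differentiableAt hU) (h2.1.differentiableAt hU)]
  exact ((hasDerivAt_cpow_neg_sub_one_mul_riemannZeta hω).congr_of_eventuallyEq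
    (eventually_of_mem hU (h1.sub_eqOn hω h2))).deriv

lemma Real.exp_log_div_two {x : ℝ} (hx : 0 < x) : Real.exp (Real.log x / 2) = Real.sqrt x := by
  rw [← Real.log_sqrt hx.le, Real.exp_log (Real.sqrt_pos.mpr hx)]

/-- For `ω > 0`, `G(ω,ω) - G(ω,1) = (1/2) log ω`; equivalently
`𝒮(ω,1) = ω^{1/2}` and `𝒮(ω,ω) = ω^{-1/2}`. -/
theorem doubleSine_at_one_and_omega (ω : ℝ) (hω : 0 < ω)
    (H1 H2 : ℂ → ℂ) (h1 : IsBarnesZeta2 ω ω H1) (h2 : IsBarnesZeta2 ω 1 H2) :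
    deriv H1 0 - deriv H2 0 = ((Real.log ω / 2 : ℝ) : ℂ) ∧
    (∀ S : ℂ, IsDoubleSine ω 1 S → S = (Real.sqrt ω : ℂ)) ∧
    (∀ S : ℂ, IsDoubleSine ω ω S → S = ((Real.sqrt ω : ℝ) : ℂ)⁻¹) := by
  refine ⟨h1.deriv_sub_deriv hω h2, ?_, ?_⟩
  · rintro S ⟨G1, G2, hG1, hG2, rfl⟩
    rw [add_sub_cancel_left] at hG1
    rw [hG1.deriv_sub_deriv hω hG2, ← ofReal_exp, Real.exp_log_div_two hω]
  · rintro S ⟨G1, G2, hG1, hG2, rfl⟩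
    rw [add_sub_cancel_right] at hG1
    rw [← neg_sub, hG2.deriv_sub_deriv hω hG1, exp_neg, ← ofReal_exp, Real.exp_log_div_two hω]
end

section
/- For ω > 1 and 0 < z, Barnes' double zeta function satisfies ζ₂(s, ω-1, z) = ζ₂(s,ω,z) - ω^{-s} ζ(s, z/ω) + ω^{-s} ζ₂(s, 1 - 1/ω, z/ω), as an identity of meromorphic functions in s (valid for Re(s) > 2 by rearrangement of absolutely convergent series). -/
/-!
Split the lattice points `z + p(ω - 1) + q` along the diagonal: those with `q ≥ p` are
`z + pω + r`, which make up `ζ₂(s, ω, z)`, and those with `q < p` are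
`z + (p' + 1)(ω - 1) + qω`. On the other side, `ω^{-s} ζ₂(s, 1 - 1/ω, z/ω)` sums over the points
`z + p(ω - 1) + qω`; its column `p = 0` is `ω^{-s} ζ(s, z/ω)` and its remaining columns are
exactly the second family. For `Re s > 2` all these double series converge absolutely, since
`z + pα + qβ ≥ min(z, α, β) (1 + p + q)`, so the rearrangements are legitimate.
-/

open Complex Function

lemma one_add_add_rpow_neg_le (p q : ℕ) {t : ℝ} (ht : 0 ≤ t) :
    (1 + p + q : ℝ) ^ (-t) ≤ (1 + p : ℝ) ^ (-(t / 2)) * (1 + q : ℝ) ^ (-(t / 2)) := by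
  calc (1 + p + q : ℝ) ^ (-t) = ((1 + p + q : ℝ) ^ 2) ^ (-(t / 2)) := by
        rw [← Real.rpow_natCast_mul (by positivity)]; ring_nf
    _ ≤ ((1 + p) * (1 + q) : ℝ) ^ (-(t / 2)) :=
        Real.rpow_le_rpow_of_nonpos (by positivity) (by nlinarith) (by linarith)
    _ = _ := Real.mul_rpow (by positivity) (by positivity)

lemma summable_one_add_add_rpow_neg {t : ℝ} (ht : 2 < t) :
    Summable fun pq : ℕ × ℕ => (1 + pq.1 + pq.2 : ℝ) ^ (-t) := by
  have h : Summable fun n : ℕ => (1 + n : ℝ) ^ (-(t / 2)) := by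
    simpa [add_comm] using
      (summable_nat_add_iff 1).2 (Real.summable_nat_rpow.2 (by linarith : -(t / 2) < -1))
  have hnonneg : 0 ≤ fun n : ℕ => (1 + n : ℝ) ^ (-(t / 2)) := fun n => by positivity
  exact (h.mul_of_nonneg h hnonneg hnonneg).of_nonneg_of_le (fun _ => by positivity)
    fun pq => one_add_add_rpow_neg_le pq.1 pq.2 (by linarith)

lemma summable_ofReal_add_mul_add_mul_cpow_neg {z α β : ℝ} (hz : 0 < z) (hα : 0 < α)
    (hβ : 0 < β) {s : ℂ} (hs : 2 < s.re) :
    Summable (uncurry fun p q : ℕ => ((z + p * α + q * β : ℝ) : ℂ) ^ (-s)) := by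
  set m := min z (min α β)
  have hm : 0 < m := lt_min hz (lt_min hα hβ)
  refine ((summable_one_add_add_rpow_neg hs).mul_left (m ^ (-s.re))).of_norm_bounded
    fun ⟨p, q⟩ => ?_
  have hmz : m ≤ z := min_le_left _ _
  have hmα : m ≤ α := (min_le_right _ _).trans (min_le_left _ _)
  have hmβ : m ≤ β := (min_le_right _ _).trans (min_le_right _ _)
  have hle : m * (1 + p + q) ≤ z + p * α + q * β :=
    calc m * (1 + p + q) = m + p * m + q * m := by ring
      _ ≤ z + p * α + q * β := by gcongr
  rw [uncurry_apply_pair, norm_cpow_eq_rpow_re_of_pos (by positivity), neg_re,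
    ← Real.mul_rpow hm.le (by positivity)]
  exact Real.rpow_le_rpow_of_nonpos (by positivity) hle (by linarith)

def diagonalSplitEquiv : ℕ × ℕ ⊕ ℕ × ℕ ≃ ℕ × ℕ where
  toFun
    | .inl (p, q) => (p, p + q)
    | .inr (p, q) => (p + q + 1, q)
  invFun pq := if pq.1 ≤ pq.2 then .inl (pq.1, pq.2 - pq.1) else .inr (pq.1 - pq.2 - 1, pq.2)
  left_inv := by
    rintro (⟨p, q⟩ | ⟨p, q⟩)
    · simp
    · simp only [if_neg (by omega : ¬p + q + 1 ≤ q)]; congr; omega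
  right_inv := by
    rintro ⟨p, q⟩
    by_cases h : p ≤ q
    · simp [h]
    · simp only [h, ↓reduceIte, Prod.mk.injEq, and_true]; omega

section

variable {M : Type*} [AddCommGroup M] [UniformSpace M] [IsUniformAddGroup M] [CompleteSpace M]
  [T2Space M]

theorem Summable.tsum_tsum_eq_diagonal_split {f : ℕ → ℕ → M} (hf : Summable (uncurry f)) :
    ∑' p, ∑' q, f p q = ∑' p, ∑' q, f p (p + q) + ∑' p, ∑' q, f (p + q + 1) q := by
  have he : Summable (uncurry f ∘ diagonalSplitEquiv) := diagonalSplitEquiv.summable_iff.2 hf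
  have h₁ : Summable (uncurry fun p q => f p (p + q)) := he.comp_injective Sum.inl_injective
  have h₂ : Summable (uncurry fun p q => f (p + q + 1) q) := he.comp_injective Sum.inr_injective
  calc ∑' p, ∑' q, f p q = ∑' pq, uncurry f pq := hf.tsum_prod.symm
    _ = ∑' x, uncurry f (diagonalSplitEquiv x) := (diagonalSplitEquiv.tsum_eq _).symm
    _ = ∑' pq, uncurry (fun p q => f p (p + q)) pq
          + ∑' pq, uncurry (fun p q => f (p + q + 1) q) pq := Summable.tsum_sum h₁ h₂
    _ = _ := by rw [h₁.tsum_prod, h₂.tsum_prod]; rfl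

theorem Summable.tsum_tsum_eq_zero_add {f : ℕ → ℕ → M} (hf : Summable (uncurry f)) :
    ∑' p, ∑' q, f p q = ∑' q, f 0 q + ∑' p, ∑' q, f (p + 1) q :=
  hf.prod.tsum_eq_zero_add

end

lemma ofReal_cpow_mul_tsum {ι : Type*} {a : ℝ} (ha : 0 ≤ a) {x : ι → ℝ} (hx : ∀ i, 0 ≤ x i)
    (s : ℂ) : (a : ℂ) ^ s * ∑' i, (x i : ℂ) ^ s = ∑' i, ((a * x i : ℝ) : ℂ) ^ s := by
  rw [← tsum_mul_left]
  exact tsum_congr fun i => by rw [ofReal_mul, mul_cpow_ofReal_nonneg ha (hx i)]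

lemma tsum_tsum_cpow_neg_eq_add_of_sub_one {ω z : ℝ} (hω : 1 < ω) (hz : 0 < z) {s : ℂ}
    (hs : 2 < s.re) :
    ∑' (p : ℕ) (q : ℕ), ((z + p * (ω - 1) + q : ℝ) : ℂ) ^ (-s)
      = ∑' (p : ℕ) (q : ℕ), ((z + p * ω + q : ℝ) : ℂ) ^ (-s)
        + ∑' (p : ℕ) (q : ℕ), ((z + (p + 1) * (ω - 1) + q * ω : ℝ) : ℂ) ^ (-s) := by
  have hf : Summable (uncurry fun p q : ℕ => ((z + p * (ω - 1) + q : ℝ) : ℂ) ^ (-s)) := by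
    simpa only [mul_one] using
      summable_ofReal_add_mul_add_mul_cpow_neg hz (sub_pos.2 hω) one_pos hs
  rw [hf.tsum_tsum_eq_diagonal_split]
  congr 1 <;> refine tsum_congr fun p => tsum_congr fun q => ?_ <;> congr 2 <;> push_cast <;>
    ring

lemma cpow_neg_mul_tsum_tsum_div_eq_add {ω z : ℝ} (hω : 1 < ω) (hz : 0 < z) {s : ℂ}
    (hs : 2 < s.re) :
    (ω : ℂ) ^ (-s) * ∑' (p : ℕ) (q : ℕ), ((z / ω + p * (1 - 1 / ω) + q : ℝ) : ℂ) ^ (-s)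
      = ∑' q : ℕ, ((z + q * ω : ℝ) : ℂ) ^ (-s)
        + ∑' (p : ℕ) (q : ℕ), ((z + (p + 1) * (ω - 1) + q * ω : ℝ) : ℂ) ^ (-s) := by
  have hω₀ : 0 < ω := by linarith
  have hω₁ : 0 ≤ 1 - 1 / ω := by rw [sub_nonneg, div_le_one hω₀]; exact hω.le
  calc _ = ∑' (p : ℕ) (q : ℕ), ((z + p * (ω - 1) + q * ω : ℝ) : ℂ) ^ (-s) := by
        rw [← tsum_mul_left]
        refine tsum_congr fun p => ?_
        rw [ofReal_cpow_mul_tsum hω₀.le fun q => by positivity]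
        congr! 3 with q
        field_simp
    _ = _ := by
        simpa only [Nat.cast_zero, zero_mul, add_zero, Nat.cast_add, Nat.cast_one] using
          (summable_ofReal_add_mul_add_mul_cpow_neg hz (sub_pos.2 hω) hω₀ hs).tsum_tsum_eq_zero_add

/-- For `ω > 1`, `z > 0` and `Re(s) > 2`,
`ζ₂(s, ω-1, z) = ζ₂(s,ω,z) - ω^{-s} ζ(s, z/ω) + ω^{-s} ζ₂(s, 1-1/ω, z/ω)`,
where `ζ₂(s,ω,z) = ∑_{p,q≥0} (z+pω+q)^{-s}` and `ζ(s,x) = ∑_{n≥0} (x+n)^{-s}`. -/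
theorem barnesZeta2_descent (ω z : ℝ) (hω : 1 < ω) (hz : 0 < z)
    (s : ℂ) (hs : 2 < s.re) :
    (∑' (p : ℕ) (q : ℕ), (((z + p * (ω - 1) + q : ℝ)) : ℂ) ^ (-s))
      = (∑' (p : ℕ) (q : ℕ), (((z + p * ω + q : ℝ)) : ℂ) ^ (-s))
        - (ω : ℂ) ^ (-s) * (∑' n : ℕ, (((z / ω + n : ℝ)) : ℂ) ^ (-s))
        + (ω : ℂ) ^ (-s) *
          (∑' (p : ℕ) (q : ℕ), (((z / ω + p * (1 - 1 / ω) + q : ℝ)) : ℂ) ^ (-s)) := by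
  have hω₀ : 0 < ω := by linarith
  have hHurwitz : (ω : ℂ) ^ (-s) * ∑' n : ℕ, ((z / ω + n : ℝ) : ℂ) ^ (-s)
      = ∑' n : ℕ, ((z + n * ω : ℝ) : ℂ) ^ (-s) := by
    rw [ofReal_cpow_mul_tsum hω₀.le fun n => by positivity]
    congr! 3 with n
    field_simp
  rw [tsum_tsum_cpow_neg_eq_add_of_sub_one hω hz hs, cpow_neg_mul_tsum_tsum_div_eq_add hω hz hs,
    hHurwitz]
  ring
end

section
/- Let K be a real quadratic field with an embedding into ℝ, and ω ∈ K with 0 < ω' < 1 < ω (where ω' is the Galois conjugate). Let {b_k} be the purely periodic minus continued fraction expansion of ω with period m (so b_{k+m} = b_k, all b_k ≥ 2), ω_k = ⟦b_k, b_{k+1}, ...⟧ the shifted continued fractions, and define A_0 = 1, A_{k+1} = A_k/ω_{k+1}. Then A_{k+1} = b_k A_k - A_{k-1} for all k, and hence the ℤ-module ⟨A_{k+1}, A_k⟩ equals ⟨1, ω⟩ for all k. -/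
/-! Multiplying `1/ω_{k+1} = b_k - ω_k` by `A_k` and using `A_k ω_k = A_{k-1}` gives the
three-term recurrence `A_{k+1} = b_k A_k - A_{k-1}` with integer coefficients.  Each step is a
unimodular change of basis of consecutive pairs, so all pairs span the same `ℤ`-module as
`(A_0, A_{-1}) = (1, ω_0)`. -/

open Submodule

section SpanPair

variable {R M : Type*} [Ring R] [AddCommGroup M] [Module R M]

theorem Submodule.span_pair_smul_sub (r : R) (a c : M) :
    span R {r • a - c, a} = span R {c, a} := by
  have le : ∀ x : M, span R {r • a - x, a} ≤ span R {x, a} := fun x =>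
    span_le.2 <| Set.insert_subset_iff.2
      ⟨sub_mem (smul_mem _ r (subset_span (by simp))) (subset_span (by simp)),
        Set.singleton_subset_iff.2 (subset_span (by simp))⟩
  refine le_antisymm (le c) ?_
  simpa using le (r • a - c)

theorem Submodule.span_pair_eq_of_recurrence {A : ℤ → M} (b : ℤ → ℤ)
    (hA : ∀ k, A (k + 1) = b k • A k - A (k - 1)) (k j : ℤ) :
    span ℤ {A (k + 1), A k} = span ℤ {A (j + 1), A j} := by
  have step : ∀ k, span ℤ {A (k + 1), A k} = span ℤ {A k, A (k - 1)} := fun k => by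
    rw [hA, span_pair_smul_sub, Set.pair_comm]
  suffices h : ∀ k, span ℤ {A (k + 1), A k} = span ℤ {A 1, A 0} by rw [h k, h j]
  intro k
  induction k using Int.induction_on with
  | zero => simp
  | succ n ih => rw [step, add_sub_cancel_right, ih]
  | pred n ih => rw [← ih, step (-n), sub_add_cancel]

end SpanPair

section MinusContinuedFraction

variable {K : Type*} [Field K] {ωs A : ℤ → K}

theorem mul_eq_pred_of_succ_eq_div (hωne : ∀ k, ωs k ≠ 0)
    (hA : ∀ k, A (k + 1) = A k / ωs (k + 1)) (k : ℤ) : A k * ωs k = A (k - 1) := by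
  rw [← sub_add_cancel k 1, hA, add_sub_cancel_right, div_mul_cancel₀ _ (hωne _)]

theorem succ_eq_mul_sub_pred_of_succ_eq_div (c : ℤ → K) (hωne : ∀ k, ωs k ≠ 0)
    (hrec : ∀ k, ωs k = c k - (ωs (k + 1))⁻¹) (hA : ∀ k, A (k + 1) = A k / ωs (k + 1))
    (k : ℤ) : A (k + 1) = c k * A k - A (k - 1) := by
  have hinv : (ωs (k + 1))⁻¹ = c k - ωs k := by linear_combination hrec k
  rw [hA, div_eq_mul_inv, hinv, ← mul_eq_pred_of_succ_eq_div hωne hA k]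
  ring

end MinusContinuedFraction

theorem continuedFraction_module_invariance_general
    (K : Type*) [Field K] (ω : K)
    (b : ℤ → ℤ)
    (ωs : ℤ → K) (hω0 : ωs 0 = ω) (hωne : ∀ k, ωs k ≠ 0)
    (hrec : ∀ k, ωs k = (b k : K) - (ωs (k + 1))⁻¹)
    (A : ℤ → K) (hA0 : A 0 = 1) (hA : ∀ k, A (k + 1) = A k / ωs (k + 1)) :
    (∀ k : ℤ, A (k + 1) = (b k : K) * A k - A (k - 1)) ∧
    (∀ k : ℤ, Submodule.span ℤ ({A (k + 1), A k} : Set K)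
      = Submodule.span ℤ ({1, ω} : Set K)) := by
  have hrecur := succ_eq_mul_sub_pred_of_succ_eq_div (fun k => (b k : K)) hωne hrec hA
  refine ⟨hrecur, fun k => ?_⟩
  have hA_neg_one : A (-1) = ω := by
    rw [← zero_sub, ← mul_eq_pred_of_succ_eq_div hωne hA, hA0, hω0, one_mul]
  rw [span_pair_eq_of_recurrence b (fun k => by rw [hrecur, zsmul_eq_mul]) k (-1),
    neg_add_cancel, hA0, hA_neg_one]

/-- Let `K` be a real quadratic field with conjugation `conj` and an embedding `ι` into `ℝ`,
and `ω ∈ K` with `0 < ω' < 1 < ω`.  Let `{b k}` be the partial quotients of the purely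
periodic minus continued fraction of `ω` (period `m`, all `b k ≥ 2`), `ωs k` the shifted
continued fractions (so `ωs k = b k - 1/ωs (k+1)` and `ωs 0 = ω`), and `A 0 = 1`,
`A (k+1) = A k / ωs (k+1)`.  Then `A (k+1) = b k · A k - A (k-1)` for all `k`, and the
`ℤ`-module `⟨A (k+1), A k⟩` equals `⟨1, ω⟩` for all `k`. -/
theorem continuedFraction_module_invariance
    (K : Type*) [Field K] [CharZero K] (hrank : Module.finrank ℚ K = 2)
    (conj : K →+* K) (hconj : ∀ x, conj (conj x) = x)
    (ι : K →+* ℝ) (ω : K)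
    (hω1 : 1 < ι ω) (hω2 : 0 < ι (conj ω)) (hω3 : ι (conj ω) < 1)
    (m : ℕ) (hm : 0 < m)
    (b : ℤ → ℤ) (hb : ∀ k, 2 ≤ b k) (hbper : ∀ k, b (k + m) = b k)
    (ωs : ℤ → K) (hω0 : ωs 0 = ω) (hωne : ∀ k, ωs k ≠ 0)
    (hrec : ∀ k, ωs k = (b k : K) - (ωs (k + 1))⁻¹)
    (A : ℤ → K) (hA0 : A 0 = 1) (hA : ∀ k, A (k + 1) = A k / ωs (k + 1)) :
    (∀ k : ℤ, A (k + 1) = (b k : K) * A k - A (k - 1)) ∧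
    (∀ k : ℤ, Submodule.span ℤ ({A (k + 1), A k} : Set K)
      = Submodule.span ℤ ({1, ω} : Set K)) :=
  continuedFraction_module_invariance_general K ω b ωs hω0 hωne hrec A hA0 hA
end

section
/- With the setup of the minus continued fraction decomposition (ω_k = b_k - 1/ω_{k+1}, A_{k+1} = A_k/ω_{k+1}, A_0 = 1), the quantity N(A_k)(ω_k - ω_k') is independent of k; specifically, N(A_k)(ω_k - ω_k') = ω_0 - ω_0' for all k ∈ ℤ, where N(α) = αα' is the field norm. -/
/-!
Subtracting the conjugate of `ω_k = b_k - 1/ω_{k+1}` cancels the integer `b_k` and leaves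
`ω_k - ω_k' = (ω_{k+1} - ω_{k+1}') / N(ω_{k+1})`, while `N(A_{k+1}) = N(A_k) / N(ω_{k+1})`.
So `N(A_k)(ω_k - ω_k')` is `1`-periodic in `k`, hence constant on `ℤ`.
-/

section

variable {K : Type*} [Field K] (σ : K →+* K)

theorem intCast_sub_inv_sub_map (n : ℤ) (η : K) :
    ((n : K) - η⁻¹) - σ ((n : K) - η⁻¹) = (η - σ η) / (η * σ η) := by
  rw [map_sub, map_intCast, map_inv₀, sub_sub_sub_cancel_left]
  rcases eq_or_ne η 0 with rfl | hη
  · simp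
  · rw [inv_sub_inv ((map_ne_zero σ).mpr hη) hη, mul_comm (σ η)]

theorem div_mul_map_div_mul_sub_map (a η : K) :
    a / η * σ (a / η) * (η - σ η) = a * σ a * ((η - σ η) / (η * σ η)) := by
  rw [map_div₀]
  ring

end

theorem norm_times_omega_diff_invariant_general
    (K : Type*) [Field K]
    (conj : K →+* K)
    (b : ℤ → ℤ)
    (ωs : ℤ → K)
    (hrec : ∀ k, ωs k = (b k : K) - (ωs (k + 1))⁻¹)
    (A : ℤ → K) (hA0 : A 0 = 1) (hA : ∀ k, A (k + 1) = A k / ωs (k + 1)) :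
    ∀ k : ℤ, (A k * conj (A k)) * (ωs k - conj (ωs k)) = ωs 0 - conj (ωs 0) := by
  have periodic :
      Function.Periodic (fun k => A k * conj (A k) * (ωs k - conj (ωs k))) 1 := fun k => by
    dsimp only
    rw [hA, hrec k, intCast_sub_inv_sub_map, div_mul_map_div_mul_sub_map]
  intro k
  simpa [hA0] using periodic.int_mul_eq k

/-- With the minus continued fraction setup (`ωs k = b k - 1/ωs (k+1)`,
`A (k+1) = A k / ωs (k+1)`, `A 0 = 1`), the quantity `N(A k)(ωs k - (ωs k)')`
is independent of `k`: it equals `ωs 0 - (ωs 0)'` for all `k ∈ ℤ`,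
where `N(α) = α·α'` is the field norm and `'` is the Galois conjugation. -/
theorem norm_times_omega_diff_invariant
    (K : Type*) [Field K] [CharZero K] (hrank : Module.finrank ℚ K = 2)
    (conj : K →+* K) (hconj : ∀ x, conj (conj x) = x)
    (b : ℤ → ℤ) (hb : ∀ k, 2 ≤ b k)
    (ωs : ℤ → K) (hωne : ∀ k, ωs k ≠ 0)
    (hrec : ∀ k, ωs k = (b k : K) - (ωs (k + 1))⁻¹)
    (A : ℤ → K) (hA0 : A 0 = 1) (hA : ∀ k, A (k + 1) = A k / ωs (k + 1)) :
    ∀ k : ℤ, (A k * conj (A k)) * (ωs k - conj (ωs k)) = ωs 0 - conj (ωs 0) :=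
  norm_times_omega_diff_invariant_general K conj b ωs hrec A hA0 hA
end

section
/- Let x_k ∈ (0,1] and y_k ∈ [0,1) be defined by the conditions x_k A_{k-1} + y_k A_k ∈ z + 𝔟 (where 𝔟 = ⟨A_k, A_{k-1}⟩ for all k). Then the recursion x_{k+1} = ⟨b_k x_k + y_k⟩ and y_{k+1} = 1 - x_k holds, where ⟨t⟩ denotes the unique representative of t mod ℤ in (0,1]. -/
/-- `⟨t⟩`: the unique representative of `t` mod `ℤ` lying in `(0,1]`. -/
def upFract (t : ℚ) : ℚ := t - ⌈t⌉ + 1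

lemma upFract_eq_of (x t : ℚ) (j : ℤ) (hx0 : 0 < x) (hx1 : x ≤ 1)
    (h : t = x + j) : upFract t = x := by
  have hc : ⌈x⌉ = 1 := by
    rw [Int.ceil_eq_iff]
    constructor <;> push_cast <;> linarith
  unfold upFract
  rw [h, Int.ceil_add_intCast, hc]
  push_cast
  ring

/-- Let `x k ∈ (0,1]`, `y k ∈ [0,1)` be determined by
`x k · A (k-1) + y k · A k ∈ z + 𝔟`, where `𝔟 = ⟨A k, A (k-1)⟩` (independent of `k`).
Then `x (k+1) = ⟨b k · x k + y k⟩` and `y (k+1) = 1 - x k`. -/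
theorem xy_recursion
    (K : Type*) [Field K] [CharZero K] (hrank : Module.finrank ℚ K = 2)
    (b : ℤ → ℤ) (hb : ∀ k, 2 ≤ b k)
    (A : ℤ → K) (hA : ∀ k : ℤ, A (k + 1) = (b k : K) * A k - A (k - 1))
    (hli : ∀ k : ℤ, LinearIndependent ℚ ![A (k - 1), A k])
    (𝔟 : Submodule ℤ K) (h𝔟 : ∀ k : ℤ, Submodule.span ℤ ({A k, A (k - 1)} : Set K) = 𝔟)
    (z : K) (x y : ℤ → ℚ)
    (hx : ∀ k, x k ∈ Set.Ioc (0 : ℚ) 1) (hy : ∀ k, y k ∈ Set.Ico (0 : ℚ) 1)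
    (hmem : ∀ k : ℤ, ((x k : K) * A (k - 1) + (y k : K) * A k) - z ∈ 𝔟) :
    ∀ k : ℤ, x (k + 1) = upFract ((b k : ℚ) * x k + y k) ∧ y (k + 1) = 1 - x k := by
  intro k
  have h1 := hmem k
  have h2 := hmem (k + 1)
  simp only [add_sub_cancel_right, hA k] at h2
  have hd : ((x (k+1) : K) * A k + (y (k+1) : K) * ((b k : K) * A k - A (k-1)) - z)
      - ((x k : K) * A (k-1) + (y k : K) * A k - z) ∈ 𝔟 := sub_mem h2 h1
  rw [← h𝔟 k, Submodule.mem_span_pair] at hd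
  obtain ⟨m, n, hmn⟩ := hd
  simp only [zsmul_eq_mul] at hmn
  have key := LinearIndependent.pair_iff.mp (hli k)
    (-(y (k+1)) - x k - (n : ℚ)) (x (k+1) + (b k : ℚ) * y (k+1) - y k - (m : ℚ))
  have h0 : (-(y (k+1)) - x k - (n : ℚ)) = 0 ∧
      (x (k+1) + (b k : ℚ) * y (k+1) - y k - (m : ℚ)) = 0 := by
    apply key
    rw [Rat.smul_def, Rat.smul_def]
    push_cast
    linear_combination -hmn
  obtain ⟨hs, ht⟩ := h0
  obtain ⟨hxk0, hxk1⟩ := hx k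
  obtain ⟨hy0, hy1⟩ := hy (k+1)
  have hn : n = -1 := by
    have l0 : (0 : ℚ) < -n := by linarith
    have l2 : (-n : ℚ) < 2 := by linarith
    have l0' : (0 : ℤ) < -n := by exact_mod_cast l0
    have l2' : (-n : ℤ) < 2 := by exact_mod_cast l2
    omega
  have hyrec : y (k+1) = 1 - x k := by
    rw [hn] at hs
    push_cast at hs
    linarith
  refine ⟨?_, hyrec⟩
  rw [hyrec] at ht
  exact (upFract_eq_of (x (k+1)) _ (b k - m) (hx (k+1)).1 (hx (k+1)).2
    (by push_cast; linarith)).symm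
end

section
/- Suppose sequences {x_k}, {y_k} of rationals with x_k ∈ (0,1], y_k ∈ [0,1) satisfy x_{k+1} = ⟨b_k x_k + y_k⟩ and y_{k+1} = 1 - x_k, with (x_k, y_k) ≠ (1,0) for all k, and are periodic with period N. Then Σ_{k=1}^N B₁(x_k)B₁(y_k) = Σ_{k=1}^N B₁(⟨-x_k⟩)B₁({-y_k}), where ⟨t⟩ ∈ (0,1] and {t} ∈ [0,1) are the representatives of t mod ℤ, and B₁(t) = t - 1/2. -/
lemma upFract_neg_Ioo {t : ℚ} (h0 : 0 < t) (h1 : t < 1) : upFract (-t) = 1 - t := by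
  unfold upFract
  have : ⌈(-t)⌉ = 0 := by
    rw [Int.ceil_eq_zero_iff]
    constructor <;> simp <;> linarith
  rw [this]; push_cast; ring

lemma upFract_neg_one : upFract (-1 : ℚ) = 1 := by
  unfold upFract
  rw [show ((-1:ℚ)) = ((-1 : ℤ) : ℚ) by norm_num, Int.ceil_intCast]
  norm_num

lemma fract_neg_Ioo {t : ℚ} (h0 : 0 < t) (h1 : t < 1) : Int.fract (-t) = 1 - t := by
  have hft : Int.fract t = t := Int.fract_eq_self.2 ⟨le_of_lt h0, h1⟩
  rw [Int.fract_neg (by rw [hft]; exact ne_of_gt h0), hft]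

/-- If `{x k} ⊆ (0,1]`, `{y k} ⊆ [0,1)` satisfy `x (k+1) = ⟨b k x k + y k⟩`,
`y (k+1) = 1 - x k`, with `(x k, y k) ≠ (1,0)` for all `k`, and are periodic of period `N`,
then `∑_{k=1}^N B₁(x k)B₁(y k) = ∑_{k=1}^N B₁(⟨-x k⟩)B₁({-y k})`, where `B₁(t) = t - 1/2`,
`⟨t⟩ ∈ (0,1]` and `{t} ∈ [0,1)` are the representatives of `t` mod `ℤ`. -/
theorem bernoulli_sum_symmetry
    (b : ℤ → ℤ) (hb : ∀ k, 2 ≤ b k)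
    (x y : ℤ → ℚ)
    (hx : ∀ k, x k ∈ Set.Ioc (0 : ℚ) 1) (hy : ∀ k, y k ∈ Set.Ico (0 : ℚ) 1)
    (hrecx : ∀ k, x (k + 1) = upFract ((b k : ℚ) * x k + y k))
    (hrecy : ∀ k, y (k + 1) = 1 - x k)
    (hne : ∀ k, ¬(x k = 1 ∧ y k = 0))
    (N : ℕ) (hN : 0 < N)
    (hperx : ∀ k, x (k + N) = x k) (hpery : ∀ k, y (k + N) = y k) :
    ∑ k ∈ Finset.range N, (x (k + 1) - 1 / 2) * (y (k + 1) - 1 / 2)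
      = ∑ k ∈ Finset.range N,
          (upFract (-(x (k + 1))) - 1 / 2) * (Int.fract (-(y (k + 1))) - 1 / 2) := by
  set c : ℤ → ℚ := fun k => if x k = 1 then y k - 1/2 else 0 with hc
  have key : ∀ k : ℤ,
      (x (k+1) - 1/2) * (y (k+1) - 1/2)
      - (upFract (-(x (k+1))) - 1/2) * (Int.fract (-(y (k+1))) - 1/2)
      = c (k+1) - c k := by
    intro k
    by_cases hxk : x k = 1
    · -- then y (k+1) = 0 and x (k+1) = y k ∈ (0,1)
      have hyk0 : 0 < y k := lt_of_le_of_ne (hy k).1 (fun h => hne k ⟨hxk, h.symm⟩)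
      have hyk1 : y k < 1 := (hy k).2
      have hy1 : y (k+1) = 0 := by rw [hrecy k, hxk]; ring
      have hx1 : x (k+1) = y k := by
        rw [hrecx k, hxk, mul_one]
        unfold upFract
        have hceil : ⌈(b k : ℚ) + y k⌉ = b k + 1 := by
          rw [add_comm, Int.ceil_add_intCast]
          have : ⌈y k⌉ = 1 := by
            rw [Int.ceil_eq_iff]
            constructor <;> push_cast <;> linarith
          rw [this]; ring
        rw [hceil]; push_cast; ring
      have hcx1 : x (k+1) ≠ 1 := by rw [hx1]; exact ne_of_lt hyk1
      rw [hy1, hx1, hc]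
      simp only [hcx1, hxk, if_true, if_false]
      rw [neg_zero, Int.fract_zero, upFract_neg_Ioo hyk0 hyk1]
      ring
    · -- x k < 1, so y (k+1) = 1 - x k ∈ (0,1)
      have hxk1 : x k < 1 := lt_of_le_of_ne (hx k).2 hxk
      have hy0 : 0 < y (k+1) := by rw [hrecy k]; linarith
      have hy1 : y (k+1) < 1 := by rw [hrecy k]; have := (hx k).1; linarith
      have hfr : Int.fract (-(y (k+1))) = 1 - y (k+1) := fract_neg_Ioo hy0 hy1
      rw [hfr, hc]
      by_cases hx1 : x (k+1) = 1
      · rw [hx1, upFract_neg_one]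
        simp only [hx1, hxk, if_true, if_false]
        ring
      · have hx1lt : x (k+1) < 1 := lt_of_le_of_ne (hx (k+1)).2 hx1
        rw [upFract_neg_Ioo (hx (k+1)).1 hx1lt]
        simp only [hx1, hxk, if_false]
        ring
  rw [← sub_eq_zero, ← Finset.sum_sub_distrib]
  have hcast : ∀ k : ℕ, ((k : ℤ) + 1) = ((k + 1 : ℕ) : ℤ) := by intro k; push_cast; ring
  calc ∑ k ∈ Finset.range N,
        ((x (k+1) - 1/2) * (y (k+1) - 1/2)
          - (upFract (-(x (k+1))) - 1/2) * (Int.fract (-(y (k+1))) - 1/2))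
      = ∑ k ∈ Finset.range N, ((fun n : ℕ => c n) (k+1) - (fun n : ℕ => c n) k) := by
        refine Finset.sum_congr rfl (fun k _ => ?_)
        simp only []
        rw [key (k : ℤ)]
        rw [hcast k]
    _ = c N - c 0 := Finset.sum_range_sub (fun n : ℕ => c n) N
    _ = 0 := by
        have hxN : x N = x 0 := by have := hperx 0; rwa [zero_add] at this
        have hyN : y N = y 0 := by have := hpery 0; rwa [zero_add] at this
        rw [hc]; simp only [hxN, hyN]; ring_nf
end
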